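/- arXiv:2411.07582 — 3 statements merged into one kernel-verified Lean document; each statement's English description precedes it below -/
import Mathlib

section
/- Let Λ be a row-finite k-graph with no sources. If the talented monoid T_Λ is atomic, then it is a unique factorization monoid: every decomposition of an element of T_Λ as a finite sum of atoms is unique up to permutation of the atoms. -/
/-- A (small) `k`-graph: a small category `Λ` with vertex set `V`, path set `P`,
range and source maps `r, s`, a degree functor `d : Λ → ℕᵏ` satisfying the
unique factorization property. -/
structure KGraph (k : ℕ) where
  V : Type
  P : Type
  r : P → V
  s : P → V
  d : P → Fin k → ℕ
  ident : V → P
  comp : (p q : P) → s p = r q → P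
  r_ident : ∀ v, r (ident v) = v
  s_ident : ∀ v, s (ident v) = v
  d_ident : ∀ v, d (ident v) = 0
  r_comp : ∀ p q h, r (comp p q h) = r p
  s_comp : ∀ p q h, s (comp p q h) = s q
  d_comp : ∀ p q h, d (comp p q h) = d p + d q
  ident_comp : ∀ (p : P) (h : s (ident (r p)) = r p), comp (ident (r p)) p h = p
  comp_ident : ∀ (p : P) (h : s p = r (ident (s p))), comp p (ident (s p)) h = p
  comp_assoc : ∀ (p q t : P) (h1 : s p = r q) (h2 : s q = r t)
      (h3 : s (comp p q h1) = r t) (h4 : s p = r (comp q t h2)),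
      comp (comp p q h1) t h3 = comp p (comp q t h2) h4
  factor : ∀ (p : P) (m n : Fin k → ℕ), d p = m + n →
      ∃! qt : P × P, ∃ h : s qt.1 = r qt.2,
        comp qt.1 qt.2 h = p ∧ d qt.1 = m ∧ d qt.2 = n

namespace KGraph

variable {k : ℕ}

/-- `vΛⁿ`, the set of paths with range `v` and degree `n`. -/
def pathsSet (Λ : KGraph k) (v : Λ.V) (n : Fin k → ℕ) : Set Λ.P :=
  {p | Λ.r p = v ∧ Λ.d p = n}

/-- `Λ` is row-finite if every `vΛⁿ` is finite. -/
def RowFinite (Λ : KGraph k) : Prop := ∀ v n, (Λ.pathsSet v n).Finite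

/-- `Λ` has no sources if every `vΛⁿ` is nonempty. -/
def NoSources (Λ : KGraph k) : Prop := ∀ v n, (Λ.pathsSet v n).Nonempty

/-- The element `Σ_{λ ∈ vΛⁿ} s(λ)` of the free commutative monoid `ℕ^(Λ⁰)`. -/
noncomputable def vSum (Λ : KGraph k) (hfin : Λ.RowFinite) (v : Λ.V) (n : Fin k → ℕ) :
    Λ.V →₀ ℕ :=
  ∑ p ∈ (hfin v n).toFinset, Finsupp.single (Λ.s p) 1

end KGraph

namespace KGraph

/-- The free commutative monoid on `Λ⁰ × ℤᵏ`. -/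
abbrev TalF (Λ : KGraph k) : Type := (Λ.V × (Fin k → ℤ)) →₀ ℕ

/-- The defining relations of the talented monoid:
`v(n) = Σ_{α ∈ vΛ^{e_i}} s(α)(n + e_i)`. -/
noncomputable def TalRel (Λ : KGraph k) (hfin : Λ.RowFinite) : TalF Λ → TalF Λ → Prop :=
  fun a b => ∃ (v : Λ.V) (n : Fin k → ℤ) (i : Fin k),
    a = Finsupp.single (v, n) 1 ∧
    b = ∑ p ∈ (hfin v (Pi.single i 1)).toFinset,
          Finsupp.single (Λ.s p, n + Pi.single i 1) 1

/-- The congruence generated by the defining relations of the talented monoid. -/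
noncomputable def TalCon (Λ : KGraph k) (hfin : Λ.RowFinite) : AddCon (TalF Λ) :=
  addConGen (TalRel Λ hfin)

/-- The talented monoid `T_Λ`. -/
abbrev Tal (Λ : KGraph k) (hfin : Λ.RowFinite) : Type := (TalCon Λ hfin).Quotient

/-- The quotient map `ℕ^(Λ⁰ × ℤᵏ) → T_Λ`. -/
noncomputable def tmk (Λ : KGraph k) (hfin : Λ.RowFinite) : TalF Λ → Tal Λ hfin :=
  (TalCon Λ hfin).mk'

/-- Shift of states on the free commutative monoid; it induces the `ℤᵏ`-action on `T_Λ`. -/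
noncomputable def shiftF (Λ : KGraph k) (p : Fin k → ℤ) : TalF Λ → TalF Λ :=
  Finsupp.mapDomain (fun q => (q.1, q.2 + p))

/-- A `ℤᵏ`-order ideal of `T_Λ`: a submonoid, downward closed in the algebraic
preorder, and closed under the `ℤᵏ`-action (expressed on representatives). -/
noncomputable def IsOrderIdeal (Λ : KGraph k) (hfin : Λ.RowFinite)
    (J : Set (Tal Λ hfin)) : Prop :=
  (0 : Tal Λ hfin) ∈ J ∧
  (∀ a b, a ∈ J → b ∈ J → a + b ∈ J) ∧
  (∀ a b : Tal Λ hfin, a + b ∈ J → a ∈ J) ∧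
  (∀ (p : Fin k → ℤ) (a : TalF Λ), tmk Λ hfin a ∈ J → tmk Λ hfin (shiftF Λ p a) ∈ J)

/-- `H ⊆ Λ⁰` is hereditary. -/
def Hereditary (Λ : KGraph k) (H : Set Λ.V) : Prop :=
  ∀ p : Λ.P, Λ.r p ∈ H → Λ.s p ∈ H

/-- `H ⊆ Λ⁰` is saturated. -/
def Saturated (Λ : KGraph k) (H : Set Λ.V) : Prop :=
  ∀ (v : Λ.V) (n : Fin k → ℕ),
    (∀ p : Λ.P, Λ.r p = v → Λ.d p = n → Λ.s p ∈ H) → v ∈ H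

/-- The `ℤᵏ`-order ideal of `T_Λ` generated by a set `X ⊆ Λ⁰` of vertices:
all `x` with `x ≤ Σᵢ ⁿⁱvᵢ` for finitely many `vᵢ ∈ X`, `nᵢ ∈ ℤᵏ`. -/
noncomputable def genIdeal (Λ : KGraph k) (hfin : Λ.RowFinite) (X : Set Λ.V) :
    Set (Tal Λ hfin) :=
  {x | ∃ b : TalF Λ, (∀ q ∈ b.support, q.1 ∈ X) ∧ ∃ z, x + z = tmk Λ hfin b}

end KGraph

/-!
Orient the defining relations as rewriting rules `v(n) ↦ Σ_{α ∈ vΛ^{e_i}} s(α)(n + e_i)` on the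
free commutative monoid `ℕ^(Λ⁰ × ℤᵏ)`. By unique factorization, the expansions of `v(n)` in
directions `i` and `j` both rewrite in one parallel step to the sum over `vΛ^{e_i + e_j}`, so
parallel rewriting is confluent and two elements are equal in `T_Λ` iff they have a common
descendant. With no sources no rule produces `0`, so a descendant of a sum of representatives of
atoms is a sum of descendants of the individual atoms, each of which must be a single generator
`w(m)` in the class of its atom. A common descendant of two atomic decompositions therefore
determines both multisets of atoms.
-/

open Finsupp

theorem Finsupp.add_eq_single_one {α : Type*} {a a' : α →₀ ℕ} {q : α}
    (h : a + a' = single q 1) : a = single q 1 ∧ a' = 0 ∨ a = 0 ∧ a' = single q 1 := by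
  classical
  have hle : toMultiset a ≤ {q} := by
    simpa [h] using (orderIsoMultiset (ι := α)).monotone (le_self_add : a ≤ a + a')
  rcases Multiset.le_singleton.mp hle with h0 | h1
  · obtain rfl : a = 0 := (orderIsoMultiset (ι := α)).injective (by simpa using h0)
    exact Or.inr ⟨rfl, by simpa using h⟩
  · obtain rfl : a = single q 1 := (orderIsoMultiset (ι := α)).injective (by simpa using h1)
    exact Or.inl ⟨rfl, by simpa using h⟩

theorem Finsupp.exists_add_of_add_eq_add {α : Type*} {x₁ x₂ a a' : α →₀ ℕ}
    (h : x₁ + x₂ = a + a') : ∃ b₁₁ b₁₂ b₂₁ b₂₂ : α →₀ ℕ,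
      x₁ = b₁₁ + b₁₂ ∧ x₂ = b₂₁ + b₂₂ ∧ a = b₁₁ + b₂₁ ∧ a' = b₁₂ + b₂₂ := by
  refine ⟨x₁ ⊓ a, x₁ - x₁ ⊓ a, a - x₁ ⊓ a, x₂ - (a - x₁ ⊓ a), ?_, ?_, ?_, ?_⟩ <;> ext y <;>
    have hy := DFunLike.congr_fun h y <;>
    simp only [add_apply, tsub_apply, inf_apply] at hy ⊢ <;> omega

section ParallelRewriting

variable {α : Type*} (R : α → (α →₀ ℕ) → Prop)

/-- Rewriting any number of generator occurrences at once is what gives one-step diamonds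
(`ParStep.diamond`), hence confluence. -/
inductive ParStep : (α →₀ ℕ) → (α →₀ ℕ) → Prop
  | rule {q : α} {e : α →₀ ℕ} : R q e → ParStep (single q 1) e
  | refl (a : α →₀ ℕ) : ParStep a a
  | add {a b c d : α →₀ ℕ} : ParStep a b → ParStep c d → ParStep (a + c) (b + d)

namespace ParStep

def Reaches : (α →₀ ℕ) → (α →₀ ℕ) → Prop := Relation.ReflTransGen (ParStep R)

def RulesJoinable : Prop :=
  ∀ q e e', R q e → R q e' → ∃ d, ParStep R e d ∧ ParStep R e' d

variable {R}

theorem eq_zero_iff (hR : ∀ q e, R q e → e ≠ 0) {a b : α →₀ ℕ} (h : ParStep R a b) :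
    a = 0 ↔ b = 0 := by
  induction h with
  | rule hqe => simpa using hR _ _ hqe
  | refl a => rfl
  | add _ _ ih₁ ih₂ => simp only [add_eq_zero, ih₁, ih₂]

theorem exists_split {a a' y : α →₀ ℕ} (h : ParStep R (a + a') y) :
    ∃ d d', y = d + d' ∧ ParStep R a d ∧ ParStep R a' d' := by
  generalize hx : a + a' = x at h
  induction h generalizing a a' with
  | @rule q e hqe =>
    rcases add_eq_single_one hx with ⟨rfl, rfl⟩ | ⟨rfl, rfl⟩
    · exact ⟨e, 0, (add_zero e).symm, rule hqe, refl 0⟩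
    · exact ⟨0, e, (zero_add e).symm, refl 0, rule hqe⟩
  | refl x => exact ⟨a, a', hx.symm, refl a, refl a'⟩
  | add _ _ ih₁ ih₂ =>
    obtain ⟨b₁₁, b₁₂, b₂₁, b₂₂, rfl, rfl, rfl, rfl⟩ := exists_add_of_add_eq_add hx.symm
    obtain ⟨d₁₁, d₁₂, rfl, h₁₁, h₁₂⟩ := ih₁ rfl
    obtain ⟨d₂₁, d₂₂, rfl, h₂₁, h₂₂⟩ := ih₂ rfl
    exact ⟨d₁₁ + d₂₁, d₁₂ + d₂₂, add_add_add_comm .., h₁₁.add h₂₁, h₁₂.add h₂₂⟩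

theorem eq_zero_of_left_eq_zero {a b : α →₀ ℕ} (h : ParStep R a b) (ha : a = 0) : b = 0 := by
  induction h with
  | rule => simp at ha
  | refl => exact ha
  | add _ _ ih₁ ih₂ =>
    obtain ⟨ha₁, ha₂⟩ := add_eq_zero.mp ha
    rw [ih₁ ha₁, ih₂ ha₂, add_zero]

theorem eq_or_rule_of_single {q : α} {c : α →₀ ℕ} (h : ParStep R (single q 1) c) :
    c = single q 1 ∨ R q c := by
  suffices ∀ x, ParStep R x c → x = single q 1 → c = single q 1 ∨ R q c from this _ h rfl
  clear h
  intro x h hx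
  induction h with
  | @rule q' e hqe =>
    obtain rfl := single_left_injective one_ne_zero hx
    exact Or.inr hqe
  | refl => exact Or.inl hx
  | add h₁ h₂ ih₁ ih₂ =>
    rcases add_eq_single_one hx with ⟨hx₁, hx₂⟩ | ⟨hx₁, hx₂⟩
    · simpa [h₂.eq_zero_of_left_eq_zero hx₂] using ih₁ hx₁
    · simpa [h₁.eq_zero_of_left_eq_zero hx₁] using ih₂ hx₂

theorem finset_sum {β : Type*} {s : Finset β} {f g : β → α →₀ ℕ}
    (h : ∀ t ∈ s, ParStep R (f t) (g t)) : ParStep R (∑ t ∈ s, f t) (∑ t ∈ s, g t) := by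
  classical
  induction s using Finset.induction_on with
  | empty => exact refl 0
  | insert t s ht ih =>
    rw [Finset.sum_insert ht, Finset.sum_insert ht]
    exact (h t (s.mem_insert_self t)).add (ih fun t' ht' => h t' (Finset.mem_insert_of_mem ht'))

theorem diamond (hR : RulesJoinable R) {a b c : α →₀ ℕ} (h₁ : ParStep R a b)
    (h₂ : ParStep R a c) : ∃ d, ParStep R b d ∧ ParStep R c d := by
  induction h₁ generalizing c with
  | @rule q e hqe =>
    rcases h₂.eq_or_rule_of_single with rfl | hqc
    · exact ⟨e, refl e, rule hqe⟩
    · exact hR q e c hqe hqc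
  | refl a => exact ⟨c, h₂, refl c⟩
  | add _ _ ih₁ ih₂ =>
    obtain ⟨c₁, c₂, rfl, hc₁, hc₂⟩ := h₂.exists_split
    obtain ⟨d₁, hd₁, hd₁'⟩ := ih₁ hc₁
    obtain ⟨d₂, hd₂, hd₂'⟩ := ih₂ hc₂
    exact ⟨d₁ + d₂, hd₁.add hd₂, hd₁'.add hd₂'⟩

namespace Reaches

theorem add {a b c d : α →₀ ℕ} (h₁ : Reaches R a b) (h₂ : Reaches R c d) :
    Reaches R (a + c) (b + d) :=
  (h₁.lift (· + c) fun _ _ h => h.add (refl c)).trans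
    (h₂.lift (b + ·) fun _ _ h => (refl b).add h)

theorem eq_zero_iff (hR : ∀ q e, R q e → e ≠ 0) {a b : α →₀ ℕ} (h : Reaches R a b) :
    a = 0 ↔ b = 0 := by
  induction h with
  | refl => rfl
  | tail _ hbc ih => exact ih.trans (hbc.eq_zero_iff hR)

theorem exists_split {a a' y : α →₀ ℕ} (h : Reaches R (a + a') y) :
    ∃ d d', y = d + d' ∧ Reaches R a d ∧ Reaches R a' d' := by
  induction h with
  | refl => exact ⟨a, a', rfl, .refl, .refl⟩
  | tail _ hyz ih =>
    obtain ⟨d, d', rfl, hd, hd'⟩ := ih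
    obtain ⟨e, e', rfl, he, he'⟩ := hyz.exists_split
    exact ⟨e, e', rfl, hd.tail he, hd'.tail he'⟩

end Reaches

def joinCon (hR : RulesJoinable R) : AddCon (α →₀ ℕ) where
  r := Relation.Join (Reaches R)
  iseqv := Relation.equivalence_join_reflTransGen fun _ _ _ hab hac =>
    let ⟨d, hbd, hcd⟩ := hab.diamond hR hac
    ⟨d, Relation.ReflGen.single hbd, Relation.ReflTransGen.single hcd⟩
  add' := fun ⟨e, h₁, h₂⟩ ⟨f, h₃, h₄⟩ => ⟨e + f, h₁.add h₃, h₂.add h₄⟩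

theorem rel_addConGen {r : (α →₀ ℕ) → (α →₀ ℕ) → Prop}
    (hr : ∀ a b, r a b ↔ ∃ q, a = single q 1 ∧ R q b) {a b : α →₀ ℕ} (h : ParStep R a b) :
    addConGen r a b := by
  induction h with
  | rule hqe => exact AddConGen.Rel.of _ _ ((hr _ _).mpr ⟨_, rfl, hqe⟩)
  | refl a => exact (addConGen r).refl a
  | add _ _ ih₁ ih₂ => exact (addConGen r).add ih₁ ih₂

theorem Reaches.rel_addConGen {r : (α →₀ ℕ) → (α →₀ ℕ) → Prop}
    (hr : ∀ a b, r a b ↔ ∃ q, a = single q 1 ∧ R q b) {a b : α →₀ ℕ} (h : Reaches R a b) :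
    addConGen r a b := by
  induction h with
  | refl => exact (addConGen r).refl _
  | tail _ hbc ih => exact (addConGen r).trans ih (hbc.rel_addConGen hr)

theorem addConGen_iff_join (hR : RulesJoinable R) {r : (α →₀ ℕ) → (α →₀ ℕ) → Prop}
    (hr : ∀ a b, r a b ↔ ∃ q, a = single q 1 ∧ R q b) (a b : α →₀ ℕ) :
    addConGen r a b ↔ Relation.Join (Reaches R) a b := by
  refine ⟨fun h => (AddCon.addConGen_le (c := joinCon hR)).mpr ?_ h, fun ⟨c, hac, hbc⟩ => ?_⟩
  · intro a b hab
    obtain ⟨q, rfl, hqb⟩ := (hr a b).mp hab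
    exact ⟨b, .single (rule hqb), .refl⟩
  · exact (addConGen r).trans (hac.rel_addConGen hr) ((addConGen r).symm (hbc.rel_addConGen hr))

variable {c : AddCon (α →₀ ℕ)}

theorem eq_zero_of_mk'_eq_zero (hR : ∀ q e, R q e → e ≠ 0)
    (hc : ∀ a b, c a b ↔ Relation.Join (Reaches R) a b) {x : α →₀ ℕ} (hx : c.mk' x = 0) :
    x = 0 := by
  obtain ⟨y, hxy, h0y⟩ := (hc x 0).mp (c.eq.mp hx)
  exact (hxy.eq_zero_iff hR).mpr ((h0y.eq_zero_iff hR).mp rfl)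

theorem exists_eq_single_of_atom (hR : ∀ q e, R q e → e ≠ 0)
    (hc : ∀ a b, c a b ↔ Relation.Join (Reaches R) a b) {x : α →₀ ℕ} (hx : c.mk' x ≠ 0)
    (hat : ∀ a b : c.Quotient, c.mk' x = a + b → a = 0 ∨ b = 0) : ∃ q, x = single q 1 := by
  obtain ⟨q, hq⟩ : x.support.Nonempty := support_nonempty_iff.mpr (by rintro rfl; exact hx rfl)
  obtain ⟨y, rfl⟩ := exists_add_of_le (single_le_iff.mpr (Nat.one_le_iff_ne_zero.mpr
    (mem_support_iff.mp hq)))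
  rcases hat _ _ (map_add c.mk' _ _) with h | h
  · exact absurd (eq_zero_of_mk'_eq_zero hR hc h) (single_ne_zero.mpr one_ne_zero)
  · exact ⟨q, by rw [eq_zero_of_mk'_eq_zero hR hc h, add_zero]⟩

theorem map_mk'_eq_of_reaches (hR : ∀ q e, R q e → e ≠ 0)
    (hc : ∀ a b, c a b ↔ Relation.Join (Reaches R) a b) {B : Multiset (α →₀ ℕ)}
    (hB : ∀ b ∈ B, c.mk' b ≠ 0 ∧ ∀ x y : c.Quotient, c.mk' b = x + y → x = 0 ∨ y = 0)
    {z : α →₀ ℕ} (h : Reaches R B.sum z) :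
    B.map c.mk' = (toMultiset z).map fun q => c.mk' (single q 1) := by
  induction B using Multiset.induction_on generalizing z with
  | empty => simp [(h.eq_zero_iff hR).mp Multiset.sum_zero]
  | cons b B ih =>
    rw [Multiset.sum_cons] at h
    obtain ⟨d, d', rfl, hbd, hBd'⟩ := h.exists_split
    have hbd : c.mk' b = c.mk' d := c.eq.mpr ((hc b d).mpr ⟨d, hbd, .refl⟩)
    obtain ⟨hb₀, hbat⟩ := hB b (Multiset.mem_cons_self b B)
    obtain ⟨q, rfl⟩ := exists_eq_single_of_atom hR hc (hbd ▸ hb₀) (hbd ▸ hbat)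
    rw [Multiset.map_cons, ih (fun b' hb' => hB b' (Multiset.mem_cons_of_mem hb')) hBd',
      map_add, toMultiset_single, one_nsmul, Multiset.singleton_add, Multiset.map_cons, hbd]

theorem eq_of_sum_eq_of_atoms (hR : ∀ q e, R q e → e ≠ 0)
    (hc : ∀ a b, c a b ↔ Relation.Join (Reaches R) a b) {l l' : Multiset c.Quotient}
    (hl : ∀ a ∈ l, a ≠ 0 ∧ ∀ x y : c.Quotient, a = x + y → x = 0 ∨ y = 0)
    (hl' : ∀ a ∈ l', a ≠ 0 ∧ ∀ x y : c.Quotient, a = x + y → x = 0 ∨ y = 0)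
    (hsum : l.sum = l'.sum) : l = l' := by
  obtain ⟨B, rfl⟩ := Multiset.map_surjective_of_surjective c.mk'_surjective l
  obtain ⟨B', rfl⟩ := Multiset.map_surjective_of_surjective c.mk'_surjective l'
  rw [← map_multiset_sum, ← map_multiset_sum] at hsum
  obtain ⟨z, hz, hz'⟩ := (hc _ _).mp (c.eq.mp hsum)
  rw [map_mk'_eq_of_reaches hR hc (by simpa using hl) hz,
    map_mk'_eq_of_reaches hR hc (by simpa using hl') hz']

end ParStep

end ParallelRewriting

namespace KGraph

variable {k : ℕ} {Λ : KGraph k}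

/-- `Σ_{λ ∈ vΛᵐ} s(λ)(n)`. -/
noncomputable def pathSum (hfin : Λ.RowFinite) (v : Λ.V) (m : Fin k → ℕ) (n : Fin k → ℤ) :
    TalF Λ :=
  ∑ p ∈ (hfin v m).toFinset, single (Λ.s p, n) 1

/-- The rewriting rules `v(n) ↦ Σ_{α ∈ vΛ^{e_i}} s(α)(n + e_i)` of the defining relations. -/
def ExpandRule (hfin : Λ.RowFinite) (q : Λ.V × (Fin k → ℤ)) (e : TalF Λ) : Prop :=
  ∃ i, e = pathSum hfin q.1 (Pi.single i 1) (q.2 + Pi.single i 1)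

theorem talRel_iff (hfin : Λ.RowFinite) (a b : TalF Λ) :
    TalRel Λ hfin a b ↔ ∃ q, a = single q 1 ∧ ExpandRule hfin q b := by
  constructor
  · rintro ⟨v, n, i, rfl, rfl⟩
    exact ⟨(v, n), rfl, i, rfl⟩
  · rintro ⟨⟨v, n⟩, rfl, i, rfl⟩
    exact ⟨v, n, i, rfl, rfl⟩

@[simp]
theorem mem_pathsSet {v : Λ.V} {m : Fin k → ℕ} {p : Λ.P} :
    p ∈ Λ.pathsSet v m ↔ Λ.r p = v ∧ Λ.d p = m :=
  Iff.rfl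

theorem pathSum_ne_zero (hfin : Λ.RowFinite) (hns : Λ.NoSources) (v : Λ.V) (m : Fin k → ℕ)
    (n : Fin k → ℤ) : pathSum hfin v m n ≠ 0 := by
  obtain ⟨p, hp⟩ := hns v m
  rw [pathSum, Ne, Finset.sum_eq_zero_iff, not_forall]
  exact ⟨p, by simpa using hp⟩

theorem expandRule_ne_zero (hfin : Λ.RowFinite) (hns : Λ.NoSources) (q : Λ.V × (Fin k → ℤ))
    (e : TalF Λ) (he : ExpandRule hfin q e) : e ≠ 0 := by
  obtain ⟨i, rfl⟩ := he
  exact pathSum_ne_zero hfin hns _ _ _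

/-- By unique factorization, `(p, p') ↦ p p'` is a bijection from pairs of composable paths of
degrees `m`, `m'` onto `vΛ^{m + m'}`. -/
theorem sum_pathSum_source (hfin : Λ.RowFinite) (v : Λ.V) (m m' : Fin k → ℕ)
    (n : Fin k → ℤ) :
    ∑ p ∈ (hfin v m).toFinset, pathSum hfin (Λ.s p) m' n = pathSum hfin v (m + m') n := by
  simp only [pathSum]
  rw [Finset.sum_sigma']
  refine Finset.sum_bij (fun x hx => Λ.comp x.1 x.2 (by simp at hx; exact hx.2.1.symm))
    ?_ ?_ ?_ fun x _ => by rw [Λ.s_comp]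
  · intro x hx
    simp only [Finset.mem_sigma, Set.Finite.mem_toFinset, mem_pathsSet] at hx ⊢
    rw [Λ.r_comp, Λ.d_comp]
    exact ⟨hx.1.1, by rw [hx.1.2, hx.2.2]⟩
  · rintro ⟨p₁, p₁'⟩ hx₁ ⟨p₂, p₂'⟩ hx₂ heq
    simp only [Finset.mem_sigma, Set.Finite.mem_toFinset, mem_pathsSet] at hx₁ hx₂ heq
    have hd : Λ.d (Λ.comp p₁ p₁' hx₁.2.1.symm) = m + m' := by rw [Λ.d_comp, hx₁.1.2, hx₁.2.2]
    obtain ⟨rfl, rfl⟩ := Prod.mk.inj <|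
      (Λ.factor _ m m' hd).unique (y₁ := (p₁, p₁')) (y₂ := (p₂, p₂'))
        ⟨hx₁.2.1.symm, rfl, hx₁.1.2, hx₁.2.2⟩ ⟨hx₂.2.1.symm, heq.symm, hx₂.1.2, hx₂.2.2⟩
    rfl
  · intro w hw
    simp only [Set.Finite.mem_toFinset, mem_pathsSet] at hw
    obtain ⟨⟨p, p'⟩, ⟨hpp', rfl, hp, hp'⟩, -⟩ := Λ.factor w m m' hw.2
    refine ⟨⟨p, p'⟩, ?_, rfl⟩
    simp only [Finset.mem_sigma, Set.Finite.mem_toFinset, mem_pathsSet]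
    exact ⟨⟨by rw [← hw.1, Λ.r_comp], hp⟩, hpp'.symm, hp'⟩

theorem rulesJoinable_expandRule (hfin : Λ.RowFinite) :
    ParStep.RulesJoinable (ExpandRule hfin) := by
  rintro ⟨v, n⟩ _ _ ⟨i, rfl⟩ ⟨j, rfl⟩
  have hstep : ∀ i j : Fin k, ParStep (ExpandRule hfin)
      (pathSum hfin v (Pi.single i 1) (n + Pi.single i 1))
      (pathSum hfin v (Pi.single i 1 + Pi.single j 1) (n + Pi.single i 1 + Pi.single j 1)) := by
    intro i j
    rw [← sum_pathSum_source]
    exact ParStep.finset_sum fun p _ => ParStep.rule ⟨j, rfl⟩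
  refine ⟨_, hstep i j, ?_⟩
  rw [add_comm (Pi.single i 1 : Fin k → ℕ), add_right_comm n]
  exact hstep j i

theorem talCon_iff_join (hfin : Λ.RowFinite) (a b : TalF Λ) :
    TalCon Λ hfin a b ↔ Relation.Join (ParStep.Reaches (ExpandRule hfin)) a b :=
  ParStep.addConGen_iff_join (rulesJoinable_expandRule hfin) (talRel_iff hfin) a b

end KGraph

open KGraph in
theorem stmt17_general {k : ℕ} (Λ : KGraph k) (hfin : Λ.RowFinite) (hns : Λ.NoSources) :
    ∀ l l' : Multiset (Tal Λ hfin),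
      (∀ a ∈ l, a ≠ 0 ∧ ∀ b c : Tal Λ hfin, a = b + c → b = 0 ∨ c = 0) →
      (∀ a ∈ l', a ≠ 0 ∧ ∀ b c : Tal Λ hfin, a = b + c → b = 0 ∨ c = 0) →
      l.sum = l'.sum → l = l' := fun _ _ =>
  ParStep.eq_of_sum_eq_of_atoms (expandRule_ne_zero hfin hns) (talCon_iff_join hfin)

open KGraph in
/-- For a row-finite `k`-graph `Λ` with no sources, if the talented monoid `T_Λ`
is atomic then it is a unique factorization monoid: decompositions into sums of
atoms are unique up to permutation (i.e. as multisets). -/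
theorem stmt17 {k : ℕ} (Λ : KGraph k) (hfin : Λ.RowFinite) (hns : Λ.NoSources)
    (hatomic : ∀ x : Tal Λ hfin, x ≠ 0 → ∃ l : Multiset (Tal Λ hfin),
      (∀ a ∈ l, a ≠ 0 ∧ ∀ b c : Tal Λ hfin, a = b + c → b = 0 ∨ c = 0) ∧
      l.sum = x) :
    ∀ l l' : Multiset (Tal Λ hfin),
      (∀ a ∈ l, a ≠ 0 ∧ ∀ b c : Tal Λ hfin, a = b + c → b = 0 ∨ c = 0) →
      (∀ a ∈ l', a ≠ 0 ∧ ∀ b c : Tal Λ hfin, a = b + c → b = 0 ∨ c = 0) →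
      l.sum = l'.sum → l = l' :=
  stmt17_general Λ hfin hns
end

section
/- Let Λ = Ω_k be the infinite grid k-graph: objects ℕ^k, morphisms {(m,n) : m ≤ n} with r(m,n)=m, s(m,n)=n, d(m,n)=n−m. Then its talented monoid T_{Ω_k} is a simple ℤ^k-monoid: its only ℤ^k-order ideals are {0} and T_{Ω_k}. Moreover every generator v(n) is an atom and ℤ^k acts freely on T_{Ω_k}. -/
theorem Finsupp.eq_zero_or_eq_zero_of_mapDomain_add_right_eq_self {G : Type*} [AddCommGroup G]
    [IsAddTorsionFree G] {F : G →₀ ℕ} {p : G} (h : F.mapDomain (· + p) = F) :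
    F = 0 ∨ p = 0 := by
  -- translating by `p` moves the first moment `∑ F d • d` by `(∑ F d) • p`
  have hweight : ∀ F : G →₀ ℕ,
      weight id (F.mapDomain (· + p)) = weight id F + degree F • p := by
    intro F
    induction F using Finsupp.induction_linear with
    | zero => simp
    | add f g hf hg => simp only [mapDomain_add, map_add, hf, hg, add_smul]; abel
    | single d m => simp [weight_single, smul_add]
  have := hweight F
  rwa [h, left_eq_add, smul_eq_zero, degree_eq_zero_iff] at this

theorem natCast_comp_single_one {ι : Type*} [DecidableEq ι] (i : ι) :
    (Nat.cast ∘ Pi.single i 1 : ι → ℤ) = Pi.single i 1 := by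
  funext j
  rcases eq_or_ne j i with rfl | h <;> simp [*]

namespace KGraph

variable {k : ℕ} {Λ : KGraph k} {hfin : Λ.RowFinite}

theorem tmk_surjective : Function.Surjective (tmk Λ hfin) := AddCon.mk'_surjective

@[simp]
theorem tmk_zero : tmk Λ hfin 0 = 0 := map_zero (TalCon Λ hfin).mk'

@[simp]
theorem tmk_add (a b : TalF Λ) : tmk Λ hfin (a + b) = tmk Λ hfin a + tmk Λ hfin b :=
  map_add (TalCon Λ hfin).mk' a b

theorem tmk_eq_tmk_of_talRel {a b : TalF Λ} (h : TalRel Λ hfin a b) :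
    tmk Λ hfin a = tmk Λ hfin b :=
  (AddCon.eq _).mpr (AddConGen.Rel.of _ _ h)

theorem shiftF_single (p : Fin k → ℤ) (q : Λ.V × (Fin k → ℤ)) (m : ℕ) :
    shiftF Λ p (Finsupp.single q m) = Finsupp.single (q.1, q.2 + p) m :=
  Finsupp.mapDomain_single

theorem closure_range_tmk_single :
    AddSubmonoid.closure (Set.range fun q => tmk Λ hfin (Finsupp.single q 1)) = ⊤ := by
  refine (AddSubmonoid.eq_top_iff' _).2 fun x => ?_
  obtain ⟨a, rfl⟩ := tmk_surjective x
  induction a using Finsupp.induction_linear with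
  | zero => simp
  | add f g hf hg => simpa using add_mem hf hg
  | single q m =>
    rw [← Finsupp.smul_single_one]
    change (TalCon Λ hfin).mk' _ ∈ _
    rw [map_nsmul]
    exact nsmul_mem (AddSubmonoid.subset_closure (Set.mem_range_self q)) m

namespace IsOrderIdeal

variable {J : Set (Tal Λ hfin)} (hJ : IsOrderIdeal Λ hfin J)
include hJ

def toAddSubmonoid : AddSubmonoid (Tal Λ hfin) where
  carrier := J
  zero_mem' := hJ.1
  add_mem' := hJ.2.1 _ _

theorem exists_tmk_single_mem (hJ0 : J ≠ {0}) : ∃ q, tmk Λ hfin (Finsupp.single q 1) ∈ J := by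
  obtain ⟨x, hxJ, hx0⟩ : ∃ x ∈ J, x ≠ 0 := by
    by_contra! h
    exact hJ0 (Set.eq_singleton_iff_unique_mem.2 ⟨hJ.1, h⟩)
  obtain ⟨a, rfl⟩ := tmk_surjective x
  obtain ⟨q, hq⟩ := Finsupp.support_nonempty_iff.2 (show a ≠ 0 by rintro rfl; exact hx0 tmk_zero)
  have hle : Finsupp.single q 1 ≤ a :=
    Finsupp.single_le_iff.2 (Nat.one_le_iff_ne_zero.2 (Finsupp.mem_support_iff.1 hq))
  refine ⟨q, hJ.2.2.1 _ (tmk Λ hfin (a - Finsupp.single q 1)) ?_⟩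
  rwa [← tmk_add, add_tsub_cancel_of_le hle]

end IsOrderIdeal

/-- `e` identifies `Λ` with the grid `k`-graph `Ω_k`. -/
structure IsGrid (Λ : KGraph k) (e : Λ.V ≃ (Fin k → ℕ)) : Prop where
  existsUnique_path : ∀ v n, ∃! p : Λ.P, Λ.r p = v ∧ Λ.d p = n
  source_eq : ∀ p : Λ.P, e (Λ.s p) = e (Λ.r p) + Λ.d p

/-- `n - e(v)` is a complete invariant of the generator `v(n)` of `T_{Ω_k}`. -/
def label (e : Λ.V ≃ (Fin k → ℕ)) (q : Λ.V × (Fin k → ℤ)) : Fin k → ℤ :=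
  q.2 - Nat.cast ∘ e q.1

theorem label_climb (e : Λ.V ≃ (Fin k → ℕ)) (v : Λ.V) (n : Fin k → ℤ) (c : Fin k → ℕ) :
    label e (e.symm (e v + c), n + Nat.cast ∘ c) = label e (v, n) := by
  funext j
  simp [label]

namespace IsGrid

variable {e : Λ.V ≃ (Fin k → ℕ)} (hΛ : Λ.IsGrid e)
include hΛ

theorem sum_toFinset_pathsSet {M : Type*} [AddCommMonoid M] (f : Λ.V → M) (v : Λ.V)
    (m : Fin k → ℕ) : ∑ p ∈ (hfin v m).toFinset, f (Λ.s p) = f (e.symm (e v + m)) := by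
  obtain ⟨p, hp, hunique⟩ := hΛ.existsUnique_path v m
  have hpaths : (hfin v m).toFinset = {p} := by
    ext p'
    simpa [pathsSet] using ⟨hunique p', fun h => h ▸ hp⟩
  rw [hpaths, Finset.sum_singleton, ← hp.1, ← hp.2, ← hΛ.source_eq, e.symm_apply_apply]

theorem talRel_iff {a b : TalF Λ} :
    TalRel Λ hfin a b ↔ ∃ (v : Λ.V) (n : Fin k → ℤ) (i : Fin k),
      a = Finsupp.single (v, n) 1 ∧
      b = Finsupp.single (e.symm (e v + Pi.single i 1), n + Pi.single i 1) 1 := by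
  simp only [TalRel]
  refine exists_congr fun v => exists_congr fun n => exists_congr fun i => ?_
  have hsum := hΛ.sum_toFinset_pathsSet (hfin := hfin)
    (fun w => Finsupp.single (w, n + Pi.single i 1) 1) v (Pi.single i 1)
  beta_reduce at hsum
  rw [hsum]

theorem tmk_single_eq_step (v : Λ.V) (n : Fin k → ℤ) (i : Fin k) :
    tmk Λ hfin (Finsupp.single (v, n) 1) =
      tmk Λ hfin (Finsupp.single (e.symm (e v + Pi.single i 1), n + Pi.single i 1) 1) :=
  tmk_eq_tmk_of_talRel (hΛ.talRel_iff.2 ⟨v, n, i, rfl, rfl⟩)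

theorem tmk_single_eq_climb (c : Fin k → ℕ) (v : Λ.V) (n : Fin k → ℤ) :
    tmk Λ hfin (Finsupp.single (v, n) 1) =
      tmk Λ hfin (Finsupp.single (e.symm (e v + c), n + Nat.cast ∘ c) 1) := by
  -- the admissible climbs `c` form a submonoid, and it contains the unit vectors
  let S : AddSubmonoid (Fin k → ℕ) :=
    { carrier := {c | ∀ v n, tmk Λ hfin (Finsupp.single (v, n) 1) =
        tmk Λ hfin (Finsupp.single (e.symm (e v + c), n + Nat.cast ∘ c) 1)}
      zero_mem' := fun v n => by simp
      add_mem' := fun {a b} ha hb v n => by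
        rw [ha, hb, e.apply_symm_apply, add_assoc, add_assoc]
        congr 5 }
  have hstep : ∀ i, Pi.single i 1 ∈ S := fun i v n => by
    rw [natCast_comp_single_one]
    exact hΛ.tmk_single_eq_step v n i
  have hc : c ∈ S := by
    rw [pi_eq_sum_univ' c]
    exact sum_mem fun i _ => nsmul_mem (hstep i) _
  exact hc v n

theorem tmk_single_eq_of_label_eq {q q' : Λ.V × (Fin k → ℤ)} (h : label e q = label e q') :
    tmk Λ hfin (Finsupp.single q 1) = tmk Λ hfin (Finsupp.single q' 1) := by
  rw [hΛ.tmk_single_eq_climb (e q'.1) q.1 q.2, hΛ.tmk_single_eq_climb (e q.1) q'.1 q'.2,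
    add_comm (e q'.1)]
  congr 3
  exact sub_eq_sub_iff_add_eq_add.1 h

noncomputable def labelHom : Tal Λ hfin →+ ((Fin k → ℤ) →₀ ℕ) :=
  AddCon.lift _ (Finsupp.mapDomain.addMonoidHom (label e)) <| AddCon.addConGen_le.2 fun a b h => by
    obtain ⟨v, n, i, rfl, rfl⟩ := hΛ.talRel_iff.1 h
    simp only [AddCon.ker_rel, Finsupp.mapDomain.addMonoidHom_apply, Finsupp.mapDomain_single]
    rw [← natCast_comp_single_one, label_climb]

theorem labelHom_tmk (a : TalF Λ) : hΛ.labelHom (tmk Λ hfin a) = a.mapDomain (label e) := rfl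

theorem labelHom_eq_zero_iff {x : Tal Λ hfin} : hΛ.labelHom x = 0 ↔ x = 0 := by
  refine ⟨fun h => ?_, fun h => h ▸ map_zero _⟩
  obtain ⟨a, rfl⟩ := tmk_surjective x
  rw [labelHom_tmk, ← Finsupp.degree_eq_zero_iff, Finsupp.degree_mapDomain,
    Finsupp.degree_eq_zero_iff] at h
  rw [h, tmk_zero]

theorem labelHom_tmk_shiftF (p : Fin k → ℤ) (a : TalF Λ) :
    hΛ.labelHom (tmk Λ hfin (shiftF Λ p a)) = (hΛ.labelHom (tmk Λ hfin a)).mapDomain (· + p) := by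
  rw [labelHom_tmk, labelHom_tmk, shiftF, ← Finsupp.mapDomain_comp, ← Finsupp.mapDomain_comp]
  congr 1
  funext q
  exact add_sub_right_comm _ _ _

theorem eq_singleton_zero_or_eq_univ {J : Set (Tal Λ hfin)} (hJ : IsOrderIdeal Λ hfin J) :
    J = {0} ∨ J = Set.univ := by
  refine or_iff_not_imp_left.2 fun hJ0 => ?_
  obtain ⟨q, hq⟩ := hJ.exists_tmk_single_mem hJ0
  have hvert : ∀ n, tmk Λ hfin (Finsupp.single (q.1, n) 1) ∈ J := fun n => by
    simpa [shiftF_single] using hJ.2.2.2 (n - q.2) _ hq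
  have hgen : ∀ q', tmk Λ hfin (Finsupp.single q' 1) ∈ hJ.toAddSubmonoid := fun q' => by
    rw [hΛ.tmk_single_eq_of_label_eq (q' := (q.1, q'.2 - Nat.cast ∘ e q'.1 + Nat.cast ∘ e q.1))
      (by simp [label])]
    exact hvert _
  have htop := AddSubmonoid.closure_le.2 (Set.range_subset_iff.2 hgen)
  rw [closure_range_tmk_single] at htop
  exact Set.eq_univ_of_forall fun x => htop (AddSubmonoid.mem_top x)

theorem tmk_single_ne_zero (v : Λ.V) (n : Fin k → ℤ) :
    tmk Λ hfin (Finsupp.single (v, n) 1) ≠ 0 := by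
  refine mt hΛ.labelHom_eq_zero_iff.2 ?_
  rw [labelHom_tmk, Finsupp.mapDomain_single]
  exact Finsupp.single_ne_zero.2 one_ne_zero

theorem eq_zero_or_eq_zero_of_tmk_single_eq_add {v : Λ.V} {n : Fin k → ℤ} {b c : Tal Λ hfin}
    (h : tmk Λ hfin (Finsupp.single (v, n) 1) = b + c) : b = 0 ∨ c = 0 := by
  have hdeg := congrArg (fun x => Finsupp.degree (hΛ.labelHom x)) h
  simp only [labelHom_tmk, Finsupp.mapDomain_single, Finsupp.degree_single, map_add] at hdeg
  rcases Nat.add_eq_one_iff.1 hdeg.symm with ⟨hb, -⟩ | ⟨-, hc⟩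
  · exact .inl (hΛ.labelHom_eq_zero_iff.1 (Finsupp.degree_eq_zero_iff _ |>.1 hb))
  · exact .inr (hΛ.labelHom_eq_zero_iff.1 (Finsupp.degree_eq_zero_iff _ |>.1 hc))

theorem tmk_eq_zero_or_eq_zero_of_tmk_shiftF_eq {a : TalF Λ} {p : Fin k → ℤ}
    (h : tmk Λ hfin (shiftF Λ p a) = tmk Λ hfin a) : tmk Λ hfin a = 0 ∨ p = 0 := by
  have hlabel := congrArg hΛ.labelHom h
  rw [labelHom_tmk_shiftF] at hlabel
  rw [← hΛ.labelHom_eq_zero_iff]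
  exact Finsupp.eq_zero_or_eq_zero_of_mapDomain_add_right_eq_self hlabel

end IsGrid

end KGraph

open KGraph in
/-- Let `Λ = Ω_k` be the infinite grid `k`-graph (characterized up to isomorphism:
vertices identified with `ℕᵏ`, exactly one path with range `v` and degree `n` for
all `v, n`, with source `v + n`). Then the talented monoid `T_{Ω_k}` is a simple
`ℤᵏ`-monoid, every generator `v(n)` is an atom, and `ℤᵏ` acts freely on it. -/
theorem stmt18 {k : ℕ} (Λ : KGraph k) (hfin : Λ.RowFinite)
    (e : Λ.V ≃ (Fin k → ℕ))
    (huniq : ∀ (v : Λ.V) (n : Fin k → ℕ), ∃! p : Λ.P, Λ.r p = v ∧ Λ.d p = n)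
    (hsrc : ∀ p : Λ.P, e (Λ.s p) = e (Λ.r p) + Λ.d p) :
    (∀ J : Set (Tal Λ hfin), IsOrderIdeal Λ hfin J → J = {0} ∨ J = Set.univ) ∧
    (∀ (v : Λ.V) (n : Fin k → ℤ),
      tmk Λ hfin (Finsupp.single (v, n) 1) ≠ 0 ∧
      ∀ b c : Tal Λ hfin, tmk Λ hfin (Finsupp.single (v, n) 1) = b + c →
        b = 0 ∨ c = 0) ∧
    (∀ (a : TalF Λ) (p : Fin k → ℤ),
      tmk Λ hfin (shiftF Λ p a) = tmk Λ hfin a → tmk Λ hfin a = 0 ∨ p = 0) := by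
  have hΛ : Λ.IsGrid e := ⟨huniq, hsrc⟩
  exact ⟨fun J hJ => hΛ.eq_singleton_zero_or_eq_univ hJ,
    fun v n => ⟨hΛ.tmk_single_ne_zero v n, fun b c => hΛ.eq_zero_or_eq_zero_of_tmk_single_eq_add⟩,
    fun a p => hΛ.tmk_eq_zero_or_eq_zero_of_tmk_shiftF_eq⟩
end

section
/- Consider the commutative monoid T generated by a single generator v(n) for each n ∈ ℤ², subject to the relations v(n) = 3·v(n+e₁) and v(n) = 2·v(n+e₂) for all n ∈ ℤ² (the talented monoid of the one-vertex 2-graph with 3 blue and 2 red loops). Then ℤ² acts freely on T: no nonzero element x of T satisfies ᵖx = x for p ≠ 0. In particular, T is conical, cancellative, not atomic (v(0) is not an atom and every element is a positive multiple of some v(p)), and 3^a = 2^b forces a = b = 0 in any fixed-point equation. -/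
/-- The free commutative monoid on the generators `v(n)`, `n ∈ ℤ²`. -/
abbrev F19 : Type := (Fin 2 → ℤ) →₀ ℕ

/-- The defining relations `v(n) = 3·v(n+e₁)` and `v(n) = 2·v(n+e₂)` of the
talented monoid of the one-vertex 2-graph with 3 blue and 2 red loops. -/
def R19 : F19 → F19 → Prop := fun a b =>
  ∃ n : Fin 2 → ℤ,
    (a = Finsupp.single n 1 ∧ b = Finsupp.single (n + Pi.single 0 1) 3) ∨
    (a = Finsupp.single n 1 ∧ b = Finsupp.single (n + Pi.single 1 1) 2)

/-- The talented monoid `T`. -/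
def T19 : Type := (addConGen R19).Quotient

noncomputable instance : AddCommMonoid T19 :=
  inferInstanceAs (AddCommMonoid (addConGen R19).Quotient)

/-- The quotient map. -/
noncomputable def mk19 : F19 → T19 := (addConGen R19).mk'

/-- The state shift on representatives, inducing the `ℤ²`-action on `T`. -/
noncomputable def shift19 (p : Fin 2 → ℤ) : F19 → F19 :=
  Finsupp.mapDomain (· + p)

/-! The assignment `v(n) ↦ 3^(-n₁) 2^(-n₂)` respects the relations, so it induces an additive map
`state : T → ℚ≥0`. By `v(n) = 3 v(n+e₁) = 2 v(n+e₂)`, every element of `T` is `t • v(q)` for all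
sufficiently large `q`, so two elements can be compared at a common `q`, and `state` is injective.
Embedding `T` into `ℚ≥0` gives conicality and cancellativity. A fixed point `ᵖx = x` with `x ≠ 0`
forces `3^(-p₁) 2^(-p₂) = 1`, hence `p = 0` by unique factorisation. Finally
`t • v(p) = v(p+e₁) + (3t - 1) • v(p+e₁)` shows that `T` has no atoms at all. -/

theorem eq_zero_and_eq_zero_of_zpow_mul_zpow_eq_one {p q : ℕ} [Fact p.Prime] [Fact q.Prime]
    (hpq : p ≠ q) {a b : ℤ} (h : (p : ℚ) ^ a * (q : ℚ) ^ b = 1) : a = 0 ∧ b = 0 := by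
  have hval (r : ℕ) [Fact r.Prime] : a * padicValRat r p + b * padicValRat r q = 0 := by
    have hp : (p : ℚ) ≠ 0 := Nat.cast_ne_zero.mpr (Fact.out : p.Prime).ne_zero
    have hq : (q : ℚ) ≠ 0 := Nat.cast_ne_zero.mpr (Fact.out : q.Prime).ne_zero
    rw [← padicValRat.zpow, ← padicValRat.zpow,
      ← padicValRat.mul (zpow_ne_zero _ hp) (zpow_ne_zero _ hq), h, padicValRat.one]
  have hvp := hval p
  have hvq := hval q
  simp [padicValNat_primes hpq, padicValNat_primes hpq.symm] at hvp hvq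
  exact ⟨hvp, hvq⟩

theorem eq_zero_and_eq_zero_of_pow_eq_pow {p q : ℕ} [Fact p.Prime] [Fact q.Prime]
    (hpq : p ≠ q) {a b : ℕ} (h : p ^ a = q ^ b) : a = 0 ∧ b = 0 := by
  have hvp := congrArg (padicValNat p) h
  have hvq := congrArg (padicValNat q) h
  simp [padicValNat_primes hpq, padicValNat_primes hpq.symm] at hvp hvq
  exact ⟨hvp, hvq.symm⟩

namespace T19

def weight (n : Fin 2 → ℤ) : ℚ≥0 := 3 ^ (-n 0) * 2 ^ (-n 1)

theorem weight_add (n m : Fin 2 → ℤ) : weight (n + m) = weight n * weight m := by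
  simp only [weight, Pi.add_apply, neg_add, zpow_add₀ (three_ne_zero' ℚ≥0),
    zpow_add₀ (two_ne_zero' ℚ≥0)]
  ring

theorem weight_ne_zero (n : Fin 2 → ℤ) : weight n ≠ 0 := by
  unfold weight; positivity

theorem eq_zero_of_weight_eq_one {p : Fin 2 → ℤ} (h : weight p = 1) : p = 0 := by
  have hq : (3 : ℚ) ^ (-p 0) * 2 ^ (-p 1) = 1 := by
    simpa [weight] using congrArg ((↑) : ℚ≥0 → ℚ) h
  obtain ⟨h0, h1⟩ := eq_zero_and_eq_zero_of_zpow_mul_zpow_eq_one (p := 3) (q := 2)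
    (by norm_num) (by exact_mod_cast hq)
  ext i
  fin_cases i <;> simp_all

theorem three_nsmul_weight_add_single_zero (n : Fin 2 → ℤ) :
    3 • weight (n + Pi.single 0 1) = weight n := by
  rw [weight_add, nsmul_eq_mul, mul_left_comm]
  simp [weight]

theorem two_nsmul_weight_add_single_one (n : Fin 2 → ℤ) :
    2 • weight (n + Pi.single 1 1) = weight n := by
  rw [weight_add, nsmul_eq_mul, mul_left_comm]
  simp [weight]

noncomputable def state₀ : F19 →ₗ[ℕ] ℚ≥0 := Finsupp.linearCombination ℕ weight

theorem addConGen_le_ker_state₀ : addConGen R19 ≤ AddCon.ker state₀ := by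
  refine AddCon.addConGen_le.mpr ?_
  rintro _ _ ⟨n, ⟨rfl, rfl⟩ | ⟨rfl, rfl⟩⟩ <;>
    simp only [AddCon.ker_rel, state₀, Finsupp.linearCombination_single, one_smul]
  exacts [(three_nsmul_weight_add_single_zero n).symm, (two_nsmul_weight_add_single_one n).symm]

noncomputable def state : T19 →+ ℚ≥0 := AddCon.lift _ state₀.toAddMonoidHom addConGen_le_ker_state₀

theorem state_mk19 (a : F19) : state (mk19 a) = state₀ a := rfl

theorem state_mk19_shift19 (p : Fin 2 → ℤ) (a : F19) :
    state (mk19 (shift19 p a)) = weight p * state (mk19 a) := by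
  rw [state_mk19, state_mk19, state₀, shift19, Finsupp.linearCombination_mapDomain]
  have hweight : weight ∘ (· + p) = LinearMap.mulLeft ℕ (weight p) ∘ weight := by
    ext n; simp [weight_add, mul_comm]
  rw [hweight, ← Finsupp.apply_linearCombination]
  rfl

noncomputable def gen (n : Fin 2 → ℤ) : T19 := mk19 (Finsupp.single n 1)

theorem mk19_zero : mk19 0 = 0 := map_zero (addConGen R19).mk'

theorem mk19_add (a b : F19) : mk19 (a + b) = mk19 a + mk19 b := map_add (addConGen R19).mk' a b

theorem mk19_single (n : Fin 2 → ℤ) (k : ℕ) : mk19 (Finsupp.single n k) = k • gen n := by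
  change (addConGen R19).mk' _ = k • (addConGen R19).mk' _
  rw [← map_nsmul, Finsupp.smul_single, smul_eq_mul, mul_one]

theorem mk19_eq_of_rel {a b : F19} (h : R19 a b) : mk19 a = mk19 b :=
  (addConGen R19).eq.mpr (AddConGen.Rel.of _ _ h)

theorem gen_eq_three_nsmul (n : Fin 2 → ℤ) : gen n = 3 • gen (n + Pi.single 0 1) := by
  rw [← mk19_single]
  exact mk19_eq_of_rel ⟨n, .inl ⟨rfl, rfl⟩⟩

theorem gen_eq_two_nsmul (n : Fin 2 → ℤ) : gen n = 2 • gen (n + Pi.single 1 1) := by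
  rw [← mk19_single]
  exact mk19_eq_of_rel ⟨n, .inr ⟨rfl, rfl⟩⟩

theorem exists_gen_eq_nsmul_gen_add_single_one (n : Fin 2 → ℤ) (i : Fin 2) :
    ∃ c : ℕ, gen n = c • gen (n + Pi.single i 1) := by
  fin_cases i
  exacts [⟨3, gen_eq_three_nsmul n⟩, ⟨2, gen_eq_two_nsmul n⟩]

theorem exists_gen_eq_nsmul_gen_add_single (n : Fin 2 → ℤ) (i : Fin 2) (k : ℕ) :
    ∃ c : ℕ, gen n = c • gen (n + Pi.single i (k : ℤ)) := by
  induction k with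
  | zero => exact ⟨1, by simp⟩
  | succ k ih =>
    obtain ⟨c, hc⟩ := ih
    obtain ⟨d, hd⟩ := exists_gen_eq_nsmul_gen_add_single_one (n + Pi.single i (k : ℤ)) i
    refine ⟨d * c, ?_⟩
    rw [hc, hd, smul_smul, add_assoc, ← Pi.single_add, mul_comm]
    push_cast
    rfl

theorem exists_gen_eq_nsmul_gen_of_le {p q : Fin 2 → ℤ} (h : p ≤ q) :
    ∃ c : ℕ, gen p = c • gen q := by
  obtain ⟨k₀, hk₀⟩ := Int.le.dest (h 0)
  obtain ⟨k₁, hk₁⟩ := Int.le.dest (h 1)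
  have hq : q = p + Pi.single 0 (k₀ : ℤ) + Pi.single 1 (k₁ : ℤ) := by
    ext i; fin_cases i <;> simp [← hk₀, ← hk₁]
  obtain ⟨c₀, hc₀⟩ := exists_gen_eq_nsmul_gen_add_single p 0 k₀
  obtain ⟨c₁, hc₁⟩ := exists_gen_eq_nsmul_gen_add_single (p + Pi.single 0 (k₀ : ℤ)) 1 k₁
  exact ⟨c₀ * c₁, by rw [hq, hc₀, hc₁, smul_smul]⟩

theorem eventually_eq_nsmul_gen (x : T19) : ∃ p, ∀ q, p ≤ q → ∃ t : ℕ, x = t • gen q := by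
  obtain ⟨a, rfl⟩ := AddCon.mk'_surjective x
  induction a using Finsupp.induction with
  | zero => exact ⟨0, fun q _ => ⟨0, by rw [zero_smul]; exact mk19_zero⟩⟩
  | single_add n k f _ _ ih =>
    obtain ⟨p, hp⟩ := ih
    refine ⟨n ⊔ p, fun q hq => ?_⟩
    obtain ⟨c, hc⟩ := exists_gen_eq_nsmul_gen_of_le (le_sup_left.trans hq)
    obtain ⟨t, ht⟩ := hp q (le_sup_right.trans hq)
    refine ⟨k * c + t, ?_⟩
    rw [add_smul, ← smul_smul, ← hc, ← mk19_single, ← ht]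
    exact mk19_add _ _

theorem exists_eq_nsmul_gen {x : T19} (hx : x ≠ 0) :
    ∃ t : ℕ, 1 ≤ t ∧ ∃ p, x = t • gen p := by
  obtain ⟨p, hp⟩ := eventually_eq_nsmul_gen x
  obtain ⟨t, rfl⟩ := hp p le_rfl
  exact ⟨t, Nat.one_le_iff_ne_zero.mpr (by rintro rfl; exact hx (zero_smul _ _)), p, rfl⟩

theorem state_nsmul_gen (t : ℕ) (p : Fin 2 → ℤ) : state (t • gen p) = t • weight p := by
  rw [map_nsmul, gen, state_mk19, state₀, Finsupp.linearCombination_single, one_smul]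

theorem state_injective : Function.Injective state := by
  intro x y h
  obtain ⟨p, hp⟩ := eventually_eq_nsmul_gen x
  obtain ⟨q, hq⟩ := eventually_eq_nsmul_gen y
  obtain ⟨t, rfl⟩ := hp (p ⊔ q) le_sup_left
  obtain ⟨s, rfl⟩ := hq (p ⊔ q) le_sup_right
  rw [state_nsmul_gen, state_nsmul_gen] at h
  simp only [nsmul_eq_mul] at h
  rw [Nat.cast_injective (mul_right_cancel₀ (weight_ne_zero _) h)]

theorem state_eq_zero_iff {x : T19} : state x = 0 ↔ x = 0 :=
  state_injective.eq_iff' (map_zero state)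

theorem nsmul_gen_ne_zero {t : ℕ} (ht : t ≠ 0) (p : Fin 2 → ℤ) : t • gen p ≠ 0 := by
  rw [Ne, ← state_eq_zero_iff, state_nsmul_gen]
  exact smul_ne_zero ht (weight_ne_zero p)

theorem not_atom (x : T19) : ¬ (x ≠ 0 ∧ ∀ b c : T19, x = b + c → b = 0 ∨ c = 0) := by
  rintro ⟨hx, hatom⟩
  obtain ⟨t, ht, p, rfl⟩ := exists_eq_nsmul_gen hx
  have hsplit :
      t • gen p = 1 • gen (p + Pi.single 0 1) + (3 * t - 1) • gen (p + Pi.single 0 1) := by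
    rw [gen_eq_three_nsmul, smul_smul, ← add_smul]
    congr 1
    omega
  rcases hatom _ _ hsplit with h | h
  · exact nsmul_gen_ne_zero one_ne_zero _ h
  · exact nsmul_gen_ne_zero (by omega) _ h

theorem eq_zero_of_mk19_shift19_eq {a : F19} {p : Fin 2 → ℤ} (h : mk19 (shift19 p a) = mk19 a)
    (ha : mk19 a ≠ 0) : p = 0 := by
  refine eq_zero_of_weight_eq_one (mul_right_cancel₀ (state_eq_zero_iff.not.mpr ha) ?_)
  rw [one_mul, ← state_mk19_shift19, h]

theorem eq_zero_of_add_eq_zero {x y : T19} (h : x + y = 0) : x = 0 := by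
  have hsum : state x + state y = 0 := by rw [← map_add, h, map_zero]
  exact state_eq_zero_iff.mp (add_eq_zero.mp hsum).1

theorem add_right_injective (x : T19) : Function.Injective (x + ·) := fun y z h =>
  state_injective <| _root_.add_left_cancel (a := state x) <| by
    rw [← map_add, ← map_add]
    exact congrArg state h

end T19

/-- For the talented monoid `T` of the one-vertex 2-graph with 3 loops of degree
`e₁` and 2 loops of degree `e₂` (relations `v(n) = 3v(n+e₁) = 2v(n+e₂)`), the
`ℤ²`-action is free; moreover `T` is conical, cancellative and not atomic:
`v(0)` is not an atom, every nonzero element is a positive multiple of some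
`v(p)`, and `3^a = 2^b` forces `a = b = 0`. -/
theorem stmt19 :
    (∀ (a : F19) (p : Fin 2 → ℤ),
      mk19 (shift19 p a) = mk19 a → mk19 a = 0 ∨ p = 0) ∧
    (∀ x y : T19, x + y = 0 → x = 0) ∧
    (∀ x y z : T19, x + y = x + z → y = z) ∧
    ¬ (mk19 (Finsupp.single (0 : Fin 2 → ℤ) 1) ≠ 0 ∧
        ∀ b c : T19, mk19 (Finsupp.single (0 : Fin 2 → ℤ) 1) = b + c →
          b = 0 ∨ c = 0) ∧
    ¬ (∀ x : T19, x ≠ 0 → ∃ l : Multiset T19,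
        (∀ a ∈ l, a ≠ 0 ∧ ∀ b c : T19, a = b + c → b = 0 ∨ c = 0) ∧
        l.sum = x) ∧
    (∀ x : T19, x ≠ 0 → ∃ t : ℕ, 1 ≤ t ∧ ∃ p : Fin 2 → ℤ,
      x = t • mk19 (Finsupp.single p 1)) ∧
    (∀ a b : ℕ, 3 ^ a = 2 ^ b → a = 0 ∧ b = 0) := by
  refine ⟨fun a p h => (eq_or_ne (mk19 a) 0).imp_right (T19.eq_zero_of_mk19_shift19_eq h),
    fun x y => T19.eq_zero_of_add_eq_zero, fun x => T19.add_right_injective x, T19.not_atom _,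
    fun h => ?_, fun x => T19.exists_eq_nsmul_gen,
    fun a b => eq_zero_and_eq_zero_of_pow_eq_pow (by norm_num)⟩
  have hgen : T19.gen 0 ≠ 0 := by simpa using T19.nsmul_gen_ne_zero one_ne_zero 0
  obtain ⟨l, hl, hsum⟩ := h (T19.gen 0) hgen
  have hl0 : l ≠ 0 := by rintro rfl; exact hgen hsum.symm
  obtain ⟨a, ha⟩ := Multiset.exists_mem_of_ne_zero hl0
  exact T19.not_atom a (hl a ha)
end
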